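/- Let X and U be Banach spaces, let the family {A(t)}_{t≥0} generate a strongly continuous evolution family {W(t,s)}_{t≥s≥0} on X, let B∈C(ℝ≥0,L(U,X)) with ‖B‖_∞ := sup_{t≥0}‖B(t)‖ < ∞, and consider the linear system whose trajectories are φ(t,t₀,x₀,u) = W(t,t₀)x₀ + ∫_{t₀}^{t} W(t,τ)B(τ)u(τ)dτ for inputs u∈PC(ℝ≥0,U). Then the following are equivalent: (i) the system is ISS; (ii) the system is 0-UGAS; (iii) the system is iISS; (iv) {W(t,s)} is uniformly asymptotically stable; (v) {W(t,s)} is uniformly exponentially stable. -/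

import Mathlib

open Filter Topology Set MeasureTheory
open scoped RealInnerProductSpace

noncomputable section

/-- Class `𝒦`: continuous, strictly increasing on `[0,∞)`, vanishing at `0`. -/
structure ClassK (g : ℝ → ℝ) : Prop where
  cont : ContinuousOn g (Set.Ici 0)
  mono : StrictMonoOn g (Set.Ici 0)
  zero : g 0 = 0
  nonneg : ∀ r : ℝ, 0 ≤ r → 0 ≤ g r

/-- Class `𝒦∞`: unbounded class-`𝒦` functions. -/
structure ClassKInf (g : ℝ → ℝ) : Prop where
  toClassK : ClassK g
  unbounded : ∀ M : ℝ, ∃ r : ℝ, 0 ≤ r ∧ M < g r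

/-- Class `𝒫`: positive definite functions. -/
structure ClassPD (g : ℝ → ℝ) : Prop where
  cont : ContinuousOn g (Set.Ici 0)
  zero : g 0 = 0
  pos : ∀ r : ℝ, 0 < r → 0 < g r

/-- Class `𝒦ℒ`. -/
structure ClassKL (b : ℝ → ℝ → ℝ) : Prop where
  classK : ∀ t : ℝ, 0 ≤ t → ClassK (fun r => b r t)
  contL : ∀ r : ℝ, 0 < r → ContinuousOn (fun t => b r t) (Set.Ici 0)
  antiL : ∀ r : ℝ, 0 < r → StrictAntiOn (fun t => b r t) (Set.Ici 0)
  tendstoL : ∀ r : ℝ, 0 < r → Tendsto (fun t => b r t) atTop (nhds 0)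

/-- Globally bounded, piecewise right-continuous input: bounded, right-continuous
everywhere, and with only finitely many discontinuities in every compact interval. -/
structure IsPC {U : Type*} [NormedAddCommGroup U] (u : ℝ → U) : Prop where
  bounded : ∃ C : ℝ, ∀ s : ℝ, ‖u s‖ ≤ C
  rightCont : ∀ t : ℝ, ContinuousWithinAt u (Set.Ici t) t
  locFinite : ∀ a b : ℝ, {s ∈ Set.Icc a b | ¬ ContinuousAt u s}.Finite

/-- The sup-norm `sup_{s ≥ 0} ‖u s‖` of an input. -/
def pcNorm {U : Type*} [NormedAddCommGroup U] (u : ℝ → U) : ℝ :=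
  sSup ((fun s => ‖u s‖) '' Set.Ici 0)

/-- Strongly continuous evolution family `{W(t,s)}_{t ≥ s ≥ 0}`. -/
structure EvolutionFamily {X : Type*} [NormedAddCommGroup X] [NormedSpace ℝ X]
    (W : ℝ → ℝ → X →L[ℝ] X) : Prop where
  idOn : ∀ t : ℝ, 0 ≤ t → ∀ x : X, W t t x = x
  comp : ∀ t r s : ℝ, 0 ≤ s → s ≤ r → r ≤ t → ∀ x : X, W t s x = W t r (W r s x)
  strongCont : ∀ x : X,
    ContinuousOn (fun p : ℝ × ℝ => W p.1 p.2 x) {p : ℝ × ℝ | 0 ≤ p.2 ∧ p.2 ≤ p.1}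

/-- Uniform stability of an evolution family. -/
def UniformlyStable {X : Type*} [NormedAddCommGroup X] [NormedSpace ℝ X]
    (W : ℝ → ℝ → X →L[ℝ] X) : Prop :=
  ∃ N : ℝ, 0 < N ∧ ∀ t0 t : ℝ, 0 ≤ t0 → t0 ≤ t → ‖W t t0‖ ≤ N

/-- Uniform attractivity of an evolution family. -/
def UniformlyAttractive {X : Type*} [NormedAddCommGroup X] [NormedSpace ℝ X]
    (W : ℝ → ℝ → X →L[ℝ] X) : Prop :=
  ∀ ε : ℝ, 0 < ε → ∃ T : ℝ, ∀ t0 t : ℝ, 0 ≤ t0 → t0 + T ≤ t → ‖W t t0‖ ≤ ε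

/-- Uniform exponential stability of an evolution family. -/
def UniformlyExpStable {X : Type*} [NormedAddCommGroup X] [NormedSpace ℝ X]
    (W : ℝ → ℝ → X →L[ℝ] X) : Prop :=
  ∃ k w : ℝ, 0 < k ∧ 0 < w ∧
    ∀ s t : ℝ, 0 ≤ s → s ≤ t → ‖W t s‖ ≤ k * Real.exp (-w * (t - s))

/-- Mild trajectory of the linear system `ẋ = A(t)x + B(t)u(t)`. -/
def lphi {X U : Type*} [NormedAddCommGroup X] [NormedSpace ℝ X]
    [NormedAddCommGroup U] [NormedSpace ℝ U]
    (W : ℝ → ℝ → X →L[ℝ] X) (B : ℝ → U →L[ℝ] X) (u : ℝ → U)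
    (t t0 : ℝ) (x0 : X) : X :=
  W t t0 x0 + ∫ τ in t0..t, W t τ (B τ (u τ))


/-!
If the evolution family satisfies `‖W t s‖ ≤ β 1 (t - s)` for a `𝒦ℒ` function `β`, then it is
uniformly stable and uniformly attractive; in particular `‖W (s + T) s‖ ≤ 1/2` for some `T > 0`,
and the cocycle property turns this into `‖W t s‖ ≤ N 2^{-⌊(t - s)/T⌋}`, i.e. exponential decay.
Conversely, exponential decay bounds the convolution term of the mild solution by
`k ‖B‖_∞ ‖u‖_∞ / w` (ISS) and by `k ‖B‖_∞ ∫ ‖u‖` (iISS); setting `u = 0` in either estimate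
gives 0-UGAS, whose `𝒦ℒ` bound on `‖W t s x‖` with `‖x‖ = 1` closes the cycle.
-/

lemma classK_const_mul {c : ℝ} (hc : 0 < c) : ClassK (fun r => c * r) where
  cont := (continuous_const.mul continuous_id).continuousOn
  mono := fun _ _ _ _ hab => mul_lt_mul_of_pos_left hab hc
  zero := mul_zero c
  nonneg := fun _ hr => mul_nonneg hc.le hr

lemma classKInf_const_mul {c : ℝ} (hc : 0 < c) : ClassKInf (fun r => c * r) where
  toClassK := classK_const_mul hc
  unbounded M := ⟨|M| / c + 1, by positivity, by
    rw [mul_add, mul_div_cancel₀ _ hc.ne', mul_one]; linarith [le_abs_self M]⟩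

lemma classK_id : ClassK (fun r => r) := by
  simpa using classK_const_mul one_pos

lemma tendsto_mul_exp_neg_mul_atTop {c w : ℝ} (hw : 0 < w) :
    Tendsto (fun s => c * Real.exp (-w * s)) atTop (𝓝 0) := by
  simpa using (Real.tendsto_exp_atBot.comp
    (tendsto_id.const_mul_atTop_of_neg (neg_neg_of_pos hw))).const_mul c

lemma classKL_mul_exp {k w : ℝ} (hk : 0 < k) (hw : 0 < w) :
    ClassKL (fun r s => k * r * Real.exp (-w * s)) where
  classK t _ := by
    convert classK_const_mul (mul_pos hk (Real.exp_pos (-w * t))) using 2 with r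
    ring
  contL _ _ := by fun_prop
  antiL r hr _ _ _ _ hab :=
    mul_lt_mul_of_pos_left (Real.exp_lt_exp.2 (by nlinarith)) (mul_pos hk hr)
  tendstoL r _ := by simpa [mul_assoc] using tendsto_mul_exp_neg_mul_atTop (c := k * r) hw

lemma integral_exp_neg_mul_sub_le {w : ℝ} (hw : 0 < w) (t0 t : ℝ) :
    ∫ τ in t0..t, Real.exp (-w * (t - τ)) ≤ w⁻¹ := by
  have hderiv : ∀ τ ∈ uIcc t0 t,
      HasDerivAt (fun τ => w⁻¹ * Real.exp (-w * (t - τ))) (Real.exp (-w * (t - τ))) τ := by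
    intro τ _
    refine (((hasDerivAt_id' τ).const_sub t).const_mul (-w)).exp.const_mul w⁻¹ |>.congr_deriv ?_
    field_simp
  rw [intervalIntegral.integral_eq_sub_of_hasDerivAt hderiv
    (by apply Continuous.intervalIntegrable; fun_prop)]
  simp only [sub_self, mul_zero, Real.exp_zero, mul_one]
  linarith [mul_pos (inv_pos.2 hw) (Real.exp_pos (-w * (t - t0)))]

lemma isPC_const_zero {U : Type*} [NormedAddCommGroup U] : IsPC (fun _ : ℝ => (0 : U)) :=
  ⟨⟨0, by simp⟩, fun _ => continuousWithinAt_const,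
    fun _ _ => Set.finite_empty.subset fun _ hs => hs.2 continuousAt_const⟩

lemma pcNorm_const_zero {U : Type*} [NormedAddCommGroup U] :
    pcNorm (fun _ : ℝ => (0 : U)) = 0 := by
  simp [pcNorm, Set.Nonempty.image_const nonempty_Ici]

namespace IsPC

variable {U : Type*} [NormedAddCommGroup U] {u : ℝ → U}

lemma norm_le_pcNorm (hu : IsPC u) {s : ℝ} (hs : 0 ≤ s) : ‖u s‖ ≤ pcNorm u := by
  obtain ⟨C, hC⟩ := hu.bounded
  exact le_csSup ⟨C, by rintro _ ⟨x, -, rfl⟩; exact hC x⟩ ⟨s, hs, rfl⟩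

lemma pcNorm_nonneg (hu : IsPC u) : 0 ≤ pcNorm u :=
  (norm_nonneg _).trans (hu.norm_le_pcNorm le_rfl)

/-- Off the finitely many discontinuities `‖u‖` is continuous, hence a.e.-measurable, and it is
bounded. -/
lemma intervalIntegrable_norm (hu : IsPC u) (a b : ℝ) :
    IntervalIntegrable (fun s => ‖u s‖) volume a b := by
  wlog hab : a ≤ b generalizing a b
  · exact (this b a (le_of_not_ge hab)).symm
  rw [intervalIntegrable_iff_integrableOn_Ioc_of_le hab]
  obtain ⟨C, hC⟩ := hu.bounded
  set S := {s ∈ Icc a b | ¬ ContinuousAt u s}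
  have hS : (S : Set ℝ).Finite := hu.locFinite a b
  have hcont : ContinuousOn (fun s => ‖u s‖) (Ioc a b \ S) := fun x hx =>
    (of_not_not fun hc => hx.2 ⟨Ioc_subset_Icc_self hx.1, hc⟩ : ContinuousAt u x)
      |>.norm.continuousWithinAt
  have hae : volume.restrict (Ioc a b \ S) = volume.restrict (Ioc a b) :=
    Measure.restrict_congr_set (sdiff_ae_eq_self.2 (measure_mono_null inter_subset_right
      (hS.measure_zero volume)))
  have hmeas := hcont.aemeasurable (μ := volume) (measurableSet_Ioc.diff hS.measurableSet)
  rw [hae] at hmeas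
  exact (integrable_const C).mono' hmeas.aestronglyMeasurable
    (Eventually.of_forall fun x => by simpa using hC x)

end IsPC

section EvolutionFamily

variable {X : Type*} [NormedAddCommGroup X] [NormedSpace ℝ X] {W : ℝ → ℝ → X →L[ℝ] X}

lemma EvolutionFamily.eq_comp (hW : EvolutionFamily W) {t r s : ℝ} (hs : 0 ≤ s) (hsr : s ≤ r)
    (hrt : r ≤ t) : W t s = (W t r).comp (W r s) :=
  ContinuousLinearMap.ext (hW.comp t r s hs hsr hrt)

lemma uniformlyStable_and_attractive_of_norm_le {β : ℝ → ℝ → ℝ} (hβ : ClassKL β)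
    (h : ∀ t0 t : ℝ, 0 ≤ t0 → t0 ≤ t → ‖W t t0‖ ≤ β 1 (t - t0)) :
    UniformlyStable W ∧ UniformlyAttractive W := by
  have hpos : 0 < β 1 0 := by
    simpa [(hβ.classK 0 le_rfl).zero] using
      (hβ.classK 0 le_rfl).mono self_mem_Ici (mem_Ici.2 zero_le_one) zero_lt_one
  have hanti := (hβ.antiL 1 one_pos).antitoneOn
  refine ⟨⟨β 1 0, hpos, fun t0 t ht0 ht => (h t0 t ht0 ht).trans ?_⟩, fun ε hε => ?_⟩
  · exact hanti self_mem_Ici (mem_Ici.2 (sub_nonneg.2 ht)) (sub_nonneg.2 ht)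
  obtain ⟨T, hT⟩ := eventually_atTop.1 ((hβ.tendstoL 1 one_pos).eventually_le_const hε)
  refine ⟨max T 0, fun t0 t ht0 ht => (h t0 t ht0 (by linarith [le_max_right T 0])).trans ?_⟩
  exact hT _ (by linarith [le_max_left T 0])

lemma UniformlyExpStable.uniformlyStable_and_attractive (hW : UniformlyExpStable W) :
    UniformlyStable W ∧ UniformlyAttractive W := by
  obtain ⟨k, w, hk, hw, h⟩ := hW
  exact uniformlyStable_and_attractive_of_norm_le (classKL_mul_exp hk hw)
    fun t0 t ht0 ht => by simpa using h t0 t ht0 ht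

lemma norm_le_mul_half_pow (hW : EvolutionFamily W) {N T : ℝ} (hT : 0 ≤ T)
    (hN : ∀ t0 t : ℝ, 0 ≤ t0 → t0 ≤ t → ‖W t t0‖ ≤ N)
    (hhalf : ∀ t0 : ℝ, 0 ≤ t0 → ‖W (t0 + T) t0‖ ≤ 1 / 2) (n : ℕ) {s t : ℝ} (hs : 0 ≤ s)
    (hst : s + n * T ≤ t) : ‖W t s‖ ≤ N * (1 / 2) ^ n := by
  induction n generalizing s with
  | zero => simpa using hN s t hs (by simpa using hst)
  | succ n ih =>
    have hsT : s + T ≤ t := by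
      push_cast at hst; linarith [mul_nonneg n.cast_nonneg hT]
    rw [hW.eq_comp hs (le_add_of_nonneg_right hT) hsT, pow_succ, ← mul_assoc]
    have htail : ‖W t (s + T)‖ ≤ N * (1 / 2) ^ n :=
      ih (by linarith) (by push_cast at hst; linarith)
    exact (ContinuousLinearMap.opNorm_comp_le _ _).trans
      (mul_le_mul htail (hhalf s hs) (norm_nonneg _) ((norm_nonneg _).trans htail))

/-- Halving over every window of length `T` means decay at rate `log 2 / T`. -/
lemma uniformlyExpStable_of_norm_le_half (hW : EvolutionFamily W) {N T : ℝ} (hN0 : 0 < N)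
    (hT : 0 < T) (hN : ∀ t0 t : ℝ, 0 ≤ t0 → t0 ≤ t → ‖W t t0‖ ≤ N)
    (hhalf : ∀ t0 : ℝ, 0 ≤ t0 → ‖W (t0 + T) t0‖ ≤ 1 / 2) : UniformlyExpStable W := by
  refine ⟨2 * N, Real.log 2 / T, by positivity, div_pos (Real.log_pos one_lt_two) hT,
    fun s t hs hst => ?_⟩
  set n := ⌊(t - s) / T⌋₊
  have hn : (n : ℝ) * T ≤ t - s := (le_div_iff₀ hT).1 (Nat.floor_le (by bound))
  have hn' : (t - s) / T < n + 1 := Nat.lt_floor_add_one _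
  have hhalf_pow : Real.exp (-Real.log 2 * (n + 1)) = (1 / 2) ^ (n + 1) := by
    rw [← Real.exp_log (one_half_pos (α := ℝ)), ← Real.exp_nat_mul, one_div,
      Real.log_inv]
    push_cast
    ring_nf
  calc ‖W t s‖ ≤ N * (1 / 2) ^ n := norm_le_mul_half_pow hW hT.le hN hhalf n hs (by linarith)
    _ = 2 * N * Real.exp (-Real.log 2 * (n + 1)) := by rw [hhalf_pow]; ring
    _ ≤ 2 * N * Real.exp (-(Real.log 2 / T) * (t - s)) := by
      refine mul_le_mul_of_nonneg_left (Real.exp_le_exp.2 ?_) (by positivity)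
      rw [neg_mul, neg_mul, neg_le_neg_iff, div_mul_eq_mul_div, mul_div_assoc]
      exact mul_le_mul_of_nonneg_left hn'.le (Real.log_nonneg one_le_two)

lemma EvolutionFamily.uniformlyExpStable (hW : EvolutionFamily W) (hS : UniformlyStable W)
    (hA : UniformlyAttractive W) : UniformlyExpStable W := by
  obtain ⟨N, hN0, hN⟩ := hS
  obtain ⟨T, hT⟩ := hA (1 / 2) one_half_pos
  exact uniformlyExpStable_of_norm_le_half hW hN0 (lt_max_of_lt_right one_pos) hN
    fun t0 ht0 => hT t0 _ ht0 (by linarith [le_max_left T 1])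

end EvolutionFamily

section ControlSystem

variable {X U : Type*} [NormedAddCommGroup X] [NormedSpace ℝ X] [NormedAddCommGroup U]
  [NormedSpace ℝ U] {W : ℝ → ℝ → X →L[ℝ] X} {B : ℝ → U →L[ℝ] X}

def IsISS (W : ℝ → ℝ → X →L[ℝ] X) (B : ℝ → U →L[ℝ] X) : Prop :=
  ∃ β : ℝ → ℝ → ℝ, ∃ γ : ℝ → ℝ, ClassKL β ∧ ClassK γ ∧
    ∀ t0 : ℝ, 0 ≤ t0 → ∀ x0 : X, ∀ u : ℝ → U, IsPC u → ∀ t : ℝ, t0 ≤ t →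
      ‖lphi W B u t t0 x0‖ ≤ β ‖x0‖ (t - t0) + γ (pcNorm u)

def IsZeroUGAS (W : ℝ → ℝ → X →L[ℝ] X) (B : ℝ → U →L[ℝ] X) : Prop :=
  ∃ β : ℝ → ℝ → ℝ, ClassKL β ∧
    ∀ t0 : ℝ, 0 ≤ t0 → ∀ x0 : X, ∀ t : ℝ, t0 ≤ t →
      ‖lphi W B (fun _ => (0 : U)) t t0 x0‖ ≤ β ‖x0‖ (t - t0)

def IsIISS (W : ℝ → ℝ → X →L[ℝ] X) (B : ℝ → U →L[ℝ] X) : Prop :=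
  ∃ α : ℝ → ℝ, ∃ μ : ℝ → ℝ, ∃ β : ℝ → ℝ → ℝ, ClassKInf α ∧ ClassK μ ∧ ClassKL β ∧
    ∀ t0 : ℝ, 0 ≤ t0 → ∀ x0 : X, ∀ u : ℝ → U, IsPC u → ∀ t : ℝ, t0 ≤ t →
      ‖lphi W B u t t0 x0‖ ≤ β ‖x0‖ (t - t0) + α (∫ s in t0..t, μ ‖u s‖)

@[simp]
lemma lphi_const_zero (t t0 : ℝ) (x0 : X) : lphi W B (fun _ => (0 : U)) t t0 x0 = W t t0 x0 := by
  simp [lphi]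

lemma IsISS.isZeroUGAS (h : IsISS W B) : IsZeroUGAS W B := by
  obtain ⟨β, γ, hβ, hγ, hbound⟩ := h
  refine ⟨β, hβ, fun t0 ht0 x0 t ht => ?_⟩
  simpa [pcNorm_const_zero, hγ.zero] using hbound t0 ht0 x0 _ isPC_const_zero t ht

lemma IsIISS.isZeroUGAS (h : IsIISS W B) : IsZeroUGAS W B := by
  obtain ⟨α, μ, β, hα, hμ, hβ, hbound⟩ := h
  refine ⟨β, hβ, fun t0 ht0 x0 t ht => ?_⟩
  simpa [hμ.zero, hα.toClassK.zero] using hbound t0 ht0 x0 _ isPC_const_zero t ht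

lemma IsZeroUGAS.uniformlyStable_and_attractive (h : IsZeroUGAS W B) :
    UniformlyStable W ∧ UniformlyAttractive W := by
  obtain ⟨β, hβ, hbound⟩ := h
  refine uniformlyStable_and_attractive_of_norm_le hβ fun t0 t ht0 ht =>
    ContinuousLinearMap.opNorm_le_of_unit_norm
      ((hβ.classK _ (sub_nonneg.2 ht)).nonneg 1 zero_le_one) fun x hx => ?_
  simpa [hx] using hbound t0 ht0 x t ht

variable {k w Bnorm : ℝ}

lemma norm_apply_apply_le_of_exp
    (hexp : ∀ s t : ℝ, 0 ≤ s → s ≤ t → ‖W t s‖ ≤ k * Real.exp (-w * (t - s)))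
    (hB : ∀ τ : ℝ, 0 ≤ τ → ‖B τ‖ ≤ Bnorm) {τ t : ℝ} (hτ : 0 ≤ τ) (hτt : τ ≤ t) (v : U) :
    ‖W t τ (B τ v)‖ ≤ k * Real.exp (-w * (t - τ)) * (Bnorm * ‖v‖) :=
  (W t τ).le_of_opNorm_le_of_le (hexp τ t hτ hτt) ((B τ).le_of_opNorm_le_of_le (hB τ hτ) le_rfl)

lemma norm_integral_le_of_exp_of_bounded (hk : 0 ≤ k) (hw : 0 < w)
    (hexp : ∀ s t : ℝ, 0 ≤ s → s ≤ t → ‖W t s‖ ≤ k * Real.exp (-w * (t - s)))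
    (hB : ∀ τ : ℝ, 0 ≤ τ → ‖B τ‖ ≤ Bnorm) {u : ℝ → U} {M : ℝ} (hM : ∀ τ : ℝ, 0 ≤ τ → ‖u τ‖ ≤ M)
    {t0 t : ℝ} (ht0 : 0 ≤ t0) (ht : t0 ≤ t) :
    ‖∫ τ in t0..t, W t τ (B τ (u τ))‖ ≤ k * Bnorm * M / w := by
  have hBM : 0 ≤ Bnorm * M :=
    mul_nonneg ((norm_nonneg _).trans (hB 0 le_rfl)) ((norm_nonneg _).trans (hM 0 le_rfl))
  have hpt : ∀ τ ∈ Ioc t0 t,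
      ‖W t τ (B τ (u τ))‖ ≤ k * Bnorm * M * Real.exp (-w * (t - τ)) := fun τ hτ => by
    have hτ0 : 0 ≤ τ := ht0.trans hτ.1.le
    calc ‖W t τ (B τ (u τ))‖ ≤ k * Real.exp (-w * (t - τ)) * (Bnorm * ‖u τ‖) :=
          norm_apply_apply_le_of_exp hexp hB hτ0 hτ.2 _
      _ ≤ k * Real.exp (-w * (t - τ)) * (Bnorm * M) := by
          gcongr
          · exact (norm_nonneg _).trans (hB 0 le_rfl)
          · exact hM τ hτ0
      _ = k * Bnorm * M * Real.exp (-w * (t - τ)) := by ring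
  calc ‖∫ τ in t0..t, W t τ (B τ (u τ))‖
      ≤ ∫ τ in t0..t, k * Bnorm * M * Real.exp (-w * (t - τ)) :=
        intervalIntegral.norm_integral_le_of_norm_le ht (Eventually.of_forall hpt)
          (by apply Continuous.intervalIntegrable; fun_prop)
    _ = k * Bnorm * M * ∫ τ in t0..t, Real.exp (-w * (t - τ)) :=
        intervalIntegral.integral_const_mul _ _
    _ ≤ k * Bnorm * M * w⁻¹ := by
        exact mul_le_mul_of_nonneg_left (integral_exp_neg_mul_sub_le hw t0 t)
          (by rw [mul_assoc]; exact mul_nonneg hk hBM)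
    _ = k * Bnorm * M / w := (div_eq_mul_inv _ _).symm

lemma norm_integral_le_of_exp_of_integrable (hk : 0 ≤ k) (hw : 0 ≤ w)
    (hexp : ∀ s t : ℝ, 0 ≤ s → s ≤ t → ‖W t s‖ ≤ k * Real.exp (-w * (t - s)))
    (hB : ∀ τ : ℝ, 0 ≤ τ → ‖B τ‖ ≤ Bnorm) {u : ℝ → U} {t0 t : ℝ}
    (hu : IntervalIntegrable (fun τ => ‖u τ‖) volume t0 t) (ht0 : 0 ≤ t0) (ht : t0 ≤ t) :
    ‖∫ τ in t0..t, W t τ (B τ (u τ))‖ ≤ k * Bnorm * ∫ τ in t0..t, ‖u τ‖ := by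
  have hpt : ∀ τ ∈ Ioc t0 t, ‖W t τ (B τ (u τ))‖ ≤ k * Bnorm * ‖u τ‖ := fun τ hτ => by
    have hτ0 : 0 ≤ τ := ht0.trans hτ.1.le
    have hdecay : Real.exp (-w * (t - τ)) ≤ 1 :=
      Real.exp_le_one_iff.2 (mul_nonpos_of_nonpos_of_nonneg (neg_nonpos.2 hw) (sub_nonneg.2 hτ.2))
    calc ‖W t τ (B τ (u τ))‖ ≤ k * Real.exp (-w * (t - τ)) * (Bnorm * ‖u τ‖) :=
          norm_apply_apply_le_of_exp hexp hB hτ0 hτ.2 _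
      _ ≤ k * 1 * (Bnorm * ‖u τ‖) := by
          gcongr
          exact mul_nonneg ((norm_nonneg _).trans (hB 0 le_rfl)) (norm_nonneg _)
      _ = k * Bnorm * ‖u τ‖ := by ring
  calc ‖∫ τ in t0..t, W t τ (B τ (u τ))‖ ≤ ∫ τ in t0..t, k * Bnorm * ‖u τ‖ :=
        intervalIntegral.norm_integral_le_of_norm_le ht (Eventually.of_forall hpt)
          (hu.const_mul _)
    _ = k * Bnorm * ∫ τ in t0..t, ‖u τ‖ := intervalIntegral.integral_const_mul _ _

lemma isISS_of_exp (hk : 0 < k) (hw : 0 < w)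
    (hexp : ∀ s t : ℝ, 0 ≤ s → s ≤ t → ‖W t s‖ ≤ k * Real.exp (-w * (t - s)))
    (hB : ∀ τ : ℝ, 0 ≤ τ → ‖B τ‖ ≤ Bnorm) : IsISS W B := by
  have hBnorm : 0 ≤ Bnorm := (norm_nonneg _).trans (hB 0 le_rfl)
  -- the `+ 1` keeps the gain strictly increasing when `Bnorm = 0`
  refine ⟨_, fun r => (k * Bnorm / w + 1) * r, classKL_mul_exp hk hw,
    classK_const_mul (by positivity), fun t0 ht0 x0 u hu t ht => ?_⟩
  have hfree := (W t t0).le_of_opNorm_le_of_le (hexp t0 t ht0 ht) (le_refl ‖x0‖)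
  have hforced := norm_integral_le_of_exp_of_bounded hk.le hw hexp hB
    (fun τ hτ => hu.norm_le_pcNorm hτ) ht0 ht
  have hM := hu.pcNorm_nonneg
  calc ‖lphi W B u t t0 x0‖ ≤ ‖W t t0 x0‖ + ‖∫ τ in t0..t, W t τ (B τ (u τ))‖ := norm_add_le _ _
    _ ≤ k * ‖x0‖ * Real.exp (-w * (t - t0)) + (k * Bnorm / w + 1) * pcNorm u := by
      rw [mul_div_right_comm] at hforced
      linarith

lemma isIISS_of_exp (hk : 0 < k) (hw : 0 < w)
    (hexp : ∀ s t : ℝ, 0 ≤ s → s ≤ t → ‖W t s‖ ≤ k * Real.exp (-w * (t - s)))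
    (hB : ∀ τ : ℝ, 0 ≤ τ → ‖B τ‖ ≤ Bnorm) : IsIISS W B := by
  have hBnorm : 0 ≤ Bnorm := (norm_nonneg _).trans (hB 0 le_rfl)
  refine ⟨fun r => (k * Bnorm + 1) * r, fun r => r, _, classKInf_const_mul (by positivity),
    classK_id, classKL_mul_exp hk hw, fun t0 ht0 x0 u hu t ht => ?_⟩
  have hfree := (W t t0).le_of_opNorm_le_of_le (hexp t0 t ht0 ht) (le_refl ‖x0‖)
  have hforced := norm_integral_le_of_exp_of_integrable hk.le hw.le hexp hB
    (hu.intervalIntegrable_norm t0 t) ht0 ht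
  have hint : 0 ≤ ∫ τ in t0..t, ‖u τ‖ :=
    intervalIntegral.integral_nonneg ht fun τ _ => norm_nonneg (u τ)
  calc ‖lphi W B u t t0 x0‖ ≤ ‖W t t0 x0‖ + ‖∫ τ in t0..t, W t τ (B τ (u τ))‖ := norm_add_le _ _
    _ ≤ k * ‖x0‖ * Real.exp (-w * (t - t0)) + (k * Bnorm + 1) * ∫ τ in t0..t, ‖u τ‖ := by
      linarith

end ControlSystem

theorem stmt9_general {X U : Type*} [NormedAddCommGroup X] [NormedSpace ℝ X]
    [NormedAddCommGroup U] [NormedSpace ℝ U]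
    (W : ℝ → ℝ → X →L[ℝ] X) (hW : EvolutionFamily W)
    (B : ℝ → U →L[ℝ] X)
    (Bnorm : ℝ) (hB : IsLUB ((fun t => ‖B t‖) '' Set.Ici 0) Bnorm) :
    List.TFAE [
      (∃ β : ℝ → ℝ → ℝ, ∃ γ : ℝ → ℝ, ClassKL β ∧ ClassK γ ∧
        ∀ t0 : ℝ, 0 ≤ t0 → ∀ x0 : X, ∀ u : ℝ → U, IsPC u → ∀ t : ℝ, t0 ≤ t →
          ‖lphi W B u t t0 x0‖ ≤ β ‖x0‖ (t - t0) + γ (pcNorm u)),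
      (∃ β : ℝ → ℝ → ℝ, ClassKL β ∧
        ∀ t0 : ℝ, 0 ≤ t0 → ∀ x0 : X, ∀ t : ℝ, t0 ≤ t →
          ‖lphi W B (fun _ => (0 : U)) t t0 x0‖ ≤ β ‖x0‖ (t - t0)),
      (∃ α : ℝ → ℝ, ∃ μ : ℝ → ℝ, ∃ β : ℝ → ℝ → ℝ, ClassKInf α ∧ ClassK μ ∧ ClassKL β ∧
        ∀ t0 : ℝ, 0 ≤ t0 → ∀ x0 : X, ∀ u : ℝ → U, IsPC u → ∀ t : ℝ, t0 ≤ t →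
          ‖lphi W B u t t0 x0‖ ≤ β ‖x0‖ (t - t0) + α (∫ s in t0..t, μ ‖u s‖)),
      UniformlyStable W ∧ UniformlyAttractive W,
      UniformlyExpStable W ] := by
  have hBle : ∀ τ : ℝ, 0 ≤ τ → ‖B τ‖ ≤ Bnorm := fun τ hτ => hB.1 ⟨τ, hτ, rfl⟩
  tfae_have 1 → 2 := IsISS.isZeroUGAS
  tfae_have 3 → 2 := IsIISS.isZeroUGAS
  tfae_have 2 → 4 := IsZeroUGAS.uniformlyStable_and_attractive
  tfae_have 4 → 5 := fun ⟨hS, hA⟩ => hW.uniformlyExpStable hS hA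
  tfae_have 5 → 4 := UniformlyExpStable.uniformlyStable_and_attractive
  tfae_have 5 → 1 := fun ⟨_, _, hk, hw, hexp⟩ => isISS_of_exp hk hw hexp hBle
  tfae_have 5 → 3 := fun ⟨_, _, hk, hw, hexp⟩ => isIISS_of_exp hk hw hexp hBle
  tfae_finish

/-- For linear time-varying systems with bounded input operators, ISS, 0-UGAS, iISS,
uniform asymptotic stability and uniform exponential stability of the evolution
family are all equivalent. -/
theorem stmt9 {X U : Type*} [NormedAddCommGroup X] [NormedSpace ℝ X] [CompleteSpace X]
    [NormedAddCommGroup U] [NormedSpace ℝ U]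
    (W : ℝ → ℝ → X →L[ℝ] X) (hW : EvolutionFamily W)
    (B : ℝ → U →L[ℝ] X) (hBcont : Continuous B)
    (Bnorm : ℝ) (hB : IsLUB ((fun t => ‖B t‖) '' Set.Ici 0) Bnorm) :
    List.TFAE [
      (∃ β : ℝ → ℝ → ℝ, ∃ γ : ℝ → ℝ, ClassKL β ∧ ClassK γ ∧
        ∀ t0 : ℝ, 0 ≤ t0 → ∀ x0 : X, ∀ u : ℝ → U, IsPC u → ∀ t : ℝ, t0 ≤ t →
          ‖lphi W B u t t0 x0‖ ≤ β ‖x0‖ (t - t0) + γ (pcNorm u)),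
      (∃ β : ℝ → ℝ → ℝ, ClassKL β ∧
        ∀ t0 : ℝ, 0 ≤ t0 → ∀ x0 : X, ∀ t : ℝ, t0 ≤ t →
          ‖lphi W B (fun _ => (0 : U)) t t0 x0‖ ≤ β ‖x0‖ (t - t0)),
      (∃ α : ℝ → ℝ, ∃ μ : ℝ → ℝ, ∃ β : ℝ → ℝ → ℝ, ClassKInf α ∧ ClassK μ ∧ ClassKL β ∧
        ∀ t0 : ℝ, 0 ≤ t0 → ∀ x0 : X, ∀ u : ℝ → U, IsPC u → ∀ t : ℝ, t0 ≤ t →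
          ‖lphi W B u t t0 x0‖ ≤ β ‖x0‖ (t - t0) + α (∫ s in t0..t, μ ‖u s‖)),
      UniformlyStable W ∧ UniformlyAttractive W,
      UniformlyExpStable W ] :=
  stmt9_general W hW B Bnorm hB
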